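/- Let N and i be positive integers and let v_0, ..., v_i be affinely independent points of ℤ^N such that the convex hull conv{v_0, ..., v_i} contains no point of ℤ^N other than v_0, ..., v_i. Then for every positive integer k, the number of points of ℤ^N lying in the relative interior of the dilated simplex conv{k·v_0, ..., k·v_i} is at least the binomial coefficient C(k−1, i). -/

import Mathlib

open Finset

/-- A point with all barycentric coordinates positive w.r.t. an affinely independent family
lies in the intrinsic interior of the convex hull of that family. -/
theorem mem_intrinsicInterior_of_pos {E : Type*} [NormedAddCommGroup E] [NormedSpace ℝ E]
    [FiniteDimensional ℝ E] {m : ℕ} (u : Fin (m + 1) → E) (hu : AffineIndependent ℝ u)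
    (w : Fin (m + 1) → ℝ) (hw : ∀ j, 0 < w j) (hw1 : Finset.univ.sum w = 1) :
    Finset.univ.affineCombination ℝ u w ∈ intrinsicInterior ℝ (convexHull ℝ (Set.range u)) := by
  set s : Set E := convexHull ℝ (Set.range u) with hs
  have hus : ∀ j, u j ∈ s := fun j => subset_convexHull ℝ _ ⟨j, rfl⟩
  haveI : Nonempty ↥s := ⟨⟨u 0, hus 0⟩⟩
  set P : AffineSubspace ℝ E := affineSpan ℝ s with hP
  haveI : Nonempty P := ⟨⟨u 0, subset_affineSpan ℝ s (hus 0)⟩⟩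
  let u' : Fin (m + 1) → P := fun j => ⟨u j, subset_affineSpan ℝ s (hus j)⟩
  have hcomp : u = (P.subtype) ∘ u' := rfl
  have hu' : AffineIndependent ℝ u' := AffineIndependent.of_comp P.subtype (hcomp ▸ hu)
  -- the span of the u' is everything
  have hspan : affineSpan ℝ (Set.range u') = ⊤ := by
    rw [eq_top_iff, ← affineSpan_coe_preimage_eq_top s]
    apply affineSpan_le.2
    intro y hy
    have hy' : (y : E) ∈ affineSpan ℝ (Set.range u) := by
      have h6 := subset_affineSpan ℝ s hy
      have h5 : affineSpan ℝ s = affineSpan ℝ (Set.range u) := by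
        rw [hs, affineSpan_convexHull]
      rw [← h5]
      exact h6
    obtain ⟨wy, hwy, hyeq⟩ := eq_affineCombination_of_mem_affineSpan_of_fintype hy'
    have : y = Finset.univ.affineCombination ℝ u' wy := by
      apply Subtype.ext
      rw [hyeq, hcomp, ← Finset.map_affineCombination _ u' wy hwy P.subtype]
      rfl
    rw [this]
    exact affineCombination_mem_affineSpan hwy u'
  let b : AffineBasis (Fin (m + 1)) ℝ P := ⟨u', hu', hspan⟩
  have hb : ⇑b = u' := rfl
  -- the point
  have hxs : Finset.univ.affineCombination ℝ u w ∈ s :=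
    affineCombination_mem_convexHull (fun j _ => (hw j).le) hw1
  let x' : P := ⟨Finset.univ.affineCombination ℝ u w, subset_affineSpan ℝ s hxs⟩
  have hx' : x' = Finset.univ.affineCombination ℝ (⇑b) w := by
    apply Subtype.ext
    rw [hb, show (↑(Finset.univ.affineCombination ℝ u' w) : E)
        = P.subtype (Finset.univ.affineCombination ℝ u' w) from rfl,
      Finset.map_affineCombination _ u' w hw1 P.subtype]
    rfl
  -- the open set
  let U : Set P := ⋂ j, (b.coord j) ⁻¹' (Set.Ioi 0)
  have hUopen : IsOpen U :=
    isOpen_iInter_of_finite fun j =>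
      (isOpen_Ioi).preimage (continuous_barycentric_coord b j)
  have hUsub : U ⊆ (Subtype.val) ⁻¹' s := by
    intro y hy
    have hpos : ∀ j, 0 < b.coord j y := fun j => Set.mem_iInter.1 hy j
    have hsum : Finset.univ.sum (fun j => b.coord j y) = 1 := b.sum_coord_apply_eq_one y
    have hyeq := b.affineCombination_coord_eq_self y
    have : (y : E) = Finset.univ.affineCombination ℝ u (fun j => b.coord j y) := by
      conv_lhs => rw [← hyeq]
      rw [hb, show (↑(Finset.univ.affineCombination ℝ u' fun j => b.coord j y) : E)
          = P.subtype (Finset.univ.affineCombination ℝ u' fun j => b.coord j y) from rfl,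
        Finset.map_affineCombination _ u' _ hsum P.subtype]
      rfl
    show (y : E) ∈ s
    rw [this]
    exact affineCombination_mem_convexHull (fun j _ => (hpos j).le) hsum
  have hxU : x' ∈ U := by
    apply Set.mem_iInter.2
    intro j
    show 0 < b.coord j x'
    rw [hx', b.coord_apply_combination_of_mem (Finset.mem_univ j) hw1]
    exact hw j
  exact mem_intrinsicInterior.2 ⟨x', interior_maximal hUsub hUopen hxU, rfl⟩

/-- Counting positive compositions: stars and bars. -/
theorem card_pos_tuples (i k : ℕ) (hk : i + 1 ≤ k) :
    Nat.card {a : Fin (i + 1) → ℕ // (∀ j, 0 < a j) ∧ Finset.univ.sum a = k}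
      = (k - 1).choose i := by
  set m := k - (i + 1) with hm
  have e : {P : Fin (i + 1) → ℕ // ∑ j, P j = m}
      ≃ {a : Fin (i + 1) → ℕ // (∀ j, 0 < a j) ∧ Finset.univ.sum a = k} :=
    { toFun := fun P => ⟨fun j => P.1 j + 1, fun j => Nat.succ_pos _, by
        have h1 : ∑ j : Fin (i + 1), (P.1 j + 1) = (∑ j, P.1 j) + (i + 1) := by
          rw [Finset.sum_add_distrib]; simp
        rw [h1, P.2]; omega⟩
      invFun := fun a => ⟨fun j => a.1 j - 1, by
        show ∑ j : Fin (i + 1), (a.1 j - 1) = m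
        have h2 : ∑ j : Fin (i + 1), (a.1 j - 1 + 1) = ∑ j, a.1 j :=
          Finset.sum_congr rfl fun j _ => Nat.sub_add_cancel (a.2.1 j)
        rw [Finset.sum_add_distrib] at h2
        simp only [Finset.sum_const, Finset.card_univ, Fintype.card_fin, smul_eq_mul,
          mul_one] at h2
        have h3 : ∑ j : Fin (i + 1), a.1 j = k := a.2.2
        omega⟩
      left_inv := fun P => Subtype.ext (funext fun j => by simp)
      right_inv := fun a => Subtype.ext (funext fun j => Nat.sub_add_cancel (a.2.1 j)) }
  rw [← Nat.card_congr e, ← Nat.card_congr (Sym.equivNatSumOfFintype (Fin (i + 1)) m),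
    Nat.card_eq_fintype_card, Sym.card_sym_eq_choose, Fintype.card_fin]
  have h4 : i + 1 + m - 1 = k - 1 := by omega
  have h5 : m = (k - 1) - i := by omega
  rw [h4, h5, Nat.choose_symm (by omega)]

/-- The canonical inclusion of integer points into real space. -/
def toReal {N : ℕ} (p : Fin N → ℤ) : Fin N → ℝ := fun t => (p t : ℝ)

/-- Let `N` and `i` be positive integers and let `v 0, ..., v i` be affinely
independent points of `ℤ^N` such that the convex hull `conv{v 0, ..., v i}` contains no point of
`ℤ^N` other than the `v j`. Then for every positive integer `k`, the number of points of `ℤ^N`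
lying in the relative interior of the dilated simplex `conv{k•v 0, ..., k•v i}` is at least the
binomial coefficient `C(k−1, i)`. -/
theorem stmt0 (N i : ℕ) (hN : 0 < N) (hi : 0 < i)
    (v : Fin (i + 1) → Fin N → ℤ)
    (hindep : AffineIndependent ℝ fun j => toReal (v j))
    (honly : ∀ p : Fin N → ℤ,
      toReal p ∈ convexHull ℝ (Set.range fun j => toReal (v j)) → ∃ j, p = v j)
    (k : ℕ) (hk : 0 < k) :
    (k - 1).choose i ≤
      {p : Fin N → ℤ |
        toReal p ∈ intrinsicInterior ℝ
          (convexHull ℝ (Set.range fun j => toReal ((k : ℤ) • v j)))}.ncard := by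
  by_cases hki : k ≤ i
  · have h0 : (k - 1).choose i = 0 := Nat.choose_eq_zero_of_lt (by omega)
    simp [h0]
  push_neg at hki
  have hk2 : i + 1 ≤ k := hki
  have hk0 : ((k : ℝ)) ≠ 0 := Nat.cast_ne_zero.mpr hk.ne'
  have hk0' : (0 : ℝ) < (k : ℝ) := by exact_mod_cast hk
  set u : Fin (i + 1) → (Fin N → ℝ) := fun j => toReal ((k : ℤ) • v j) with hu_def
  have hu_eq : ∀ j, u j = (k : ℝ) • toReal (v j) := by
    intro j
    funext t
    simp only [hu_def, toReal, Pi.smul_apply, smul_eq_mul]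
    push_cast
    ring
  -- affine independence of the dilated family
  have hu : AffineIndependent ℝ u := by
    have : u = (((k : ℝ) • (LinearMap.id : (Fin N → ℝ) →ₗ[ℝ] (Fin N → ℝ))).toAffineMap)
        ∘ (fun j => toReal (v j)) := by
      funext j
      simp [hu_eq j]
    rw [this]
    apply hindep.map'
    intro x y hxy
    simp only [LinearMap.coe_toAffineMap, LinearMap.smul_apply, LinearMap.id_coe, id_eq] at hxy
    exact smul_right_injective _ hk0 hxy
  set S : Set (Fin N → ℤ) :=
    {p : Fin N → ℤ | toReal p ∈ intrinsicInterior ℝ (convexHull ℝ (Set.range u))} with hS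
  -- S is finite
  have hSfin : S.Finite := by
    set c₁ : Fin N → ℤ := fun t => Finset.univ.inf' Finset.univ_nonempty
      (fun j => (k : ℤ) * v j t) with hc₁
    set c₂ : Fin N → ℤ := fun t => Finset.univ.sup' Finset.univ_nonempty
      (fun j => (k : ℤ) * v j t) with hc₂
    have hsub : S ⊆ Set.pi Set.univ fun t => Set.Icc (c₁ t) (c₂ t) := by
      intro p hp
      have hp1 : toReal p ∈ convexHull ℝ (Set.range u) := intrinsicInterior_subset hp
      have hB : convexHull ℝ (Set.range u)
          ⊆ Set.pi Set.univ fun t => Set.Icc ((c₁ t : ℝ)) ((c₂ t : ℝ)) := by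
        apply convexHull_min
        · rintro _ ⟨j, rfl⟩ t _
          have h1 : c₁ t ≤ (k : ℤ) * v j t := by
            exact Finset.inf'_le (fun j => (k : ℤ) * v j t) (Finset.mem_univ j)
          have h2 : (k : ℤ) * v j t ≤ c₂ t := by
            exact Finset.le_sup' (fun j => (k : ℤ) * v j t) (Finset.mem_univ j)
          have h3 : u j t = (((k : ℤ) * v j t : ℤ) : ℝ) := by
            simp [hu_def, toReal]
          constructor
          · rw [h3]; exact_mod_cast h1
          · rw [h3]; exact_mod_cast h2
        · exact convex_pi fun t _ => convex_Icc _ _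
      have := hB hp1
      intro t _
      have ht := this t (Set.mem_univ t)
      simp only [toReal, Set.mem_Icc] at ht ⊢
      exact ⟨by exact_mod_cast ht.1, by exact_mod_cast ht.2⟩
    exact Set.Finite.subset (Set.Finite.pi fun t => Set.finite_Icc _ _) hsub
  haveI : Finite ↥S := hSfin.to_subtype
  -- the injection from positive compositions
  let F : {a : Fin (i + 1) → ℕ // (∀ j, 0 < a j) ∧ Finset.univ.sum a = k} → ↥S := fun a =>
    ⟨fun t => ∑ j, (a.1 j : ℤ) * v j t, by
      show toReal _ ∈ intrinsicInterior ℝ (convexHull ℝ (Set.range u))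
      set w : Fin (i + 1) → ℝ := fun j => (a.1 j : ℝ) / k with hwdef
      have hwpos : ∀ j, 0 < w j := fun j =>
        div_pos (by exact_mod_cast a.2.1 j) hk0'
      have hw1 : Finset.univ.sum w = 1 := by
        simp only [hwdef]
        rw [← Finset.sum_div]
        rw [show (∑ j, (a.1 j : ℝ)) = ((Finset.univ.sum a.1 : ℕ) : ℝ) by push_cast; rfl, a.2.2]
        field_simp
      have hpt : toReal (fun t => ∑ j, (a.1 j : ℤ) * v j t)
          = Finset.univ.affineCombination ℝ u w := by
        rw [affineCombination_eq_linear_combination _ _ _ hw1]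
        funext t
        simp only [toReal]
        push_cast
        rw [Finset.sum_apply]
        apply Finset.sum_congr rfl
        intro j _
        have : (w j • u j) t = w j * (u j t) := rfl
        rw [this, hu_eq j]
        show (a.1 j : ℝ) * (v j t : ℝ) = (a.1 j : ℝ) / k * ((k : ℝ) • toReal (v j)) t
        simp only [Pi.smul_apply, smul_eq_mul, toReal]
        field_simp
      rw [hpt]
      exact mem_intrinsicInterior_of_pos u hu w hwpos hw1⟩
  have hFinj : Function.Injective F := by
    intro a b hab
    have h1 : ∀ t, ∑ j, (a.1 j : ℤ) * v j t = ∑ j, (b.1 j : ℤ) * v j t := by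
      intro t
      exact congrFun (congrArg Subtype.val hab) t
    have h2 : ∑ j, ((a.1 j : ℝ) - (b.1 j : ℝ)) • toReal (v j) = 0 := by
      funext t
      rw [Finset.sum_apply]
      simp only [Pi.smul_apply, smul_eq_mul, toReal, Pi.zero_apply, sub_mul]
      rw [Finset.sum_sub_distrib]
      have := h1 t
      have ha : ∑ j, (a.1 j : ℝ) * (v j t : ℝ) = ∑ j, (b.1 j : ℝ) * (v j t : ℝ) := by
        exact_mod_cast congrArg (fun z : ℤ => (z : ℝ)) this
      rw [ha, sub_self]
    have h3 : Finset.univ.sum (fun j => ((a.1 j : ℝ) - (b.1 j : ℝ))) = 0 := by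
      rw [Finset.sum_sub_distrib]
      rw [show (∑ j, (a.1 j : ℝ)) = ((Finset.univ.sum a.1 : ℕ) : ℝ) by push_cast; rfl,
        show (∑ j, (b.1 j : ℝ)) = ((Finset.univ.sum b.1 : ℕ) : ℝ) by push_cast; rfl,
        a.2.2, b.2.2, sub_self]
    have h4 := affineIndependent_iff.mp hindep Finset.univ _ h3 h2
    apply Subtype.ext
    funext j
    have := h4 j (Finset.mem_univ j)
    have : (a.1 j : ℝ) = (b.1 j : ℝ) := by linarith [this]
    exact_mod_cast this
  calc (k - 1).choose i
      = Nat.card {a : Fin (i + 1) → ℕ // (∀ j, 0 < a j) ∧ Finset.univ.sum a = k} :=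
        (card_pos_tuples i k hk2).symm
    _ ≤ Nat.card ↥S := Nat.card_le_card_of_injective F hFinj
    _ = S.ncard := Nat.card_coe_set_eq S
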